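/- arXiv:1010.4988 — 4 statements merged into one kernel-verified Lean document; each statement's English description precedes it below -/
import Mathlib

section
/- Any absolutely continuous and nondecreasing viscosity supersolution ū of L*(u)=0 on (0,∞) is semiconcave on every interval [x₀,x₁] ⊂ (0,∞), i.e., for each such interval there exists K ∈ ℝ such that x ↦ ū(x) − Kx²/2 is concave on [x₀,x₁]. -/
open MeasureTheory Set Filter

/-- The operator `L_γ(u,f)(x)` from the paper: second-order integro-differential
operator with drift/volatility controlled by `γ`, integral term with respect to the
Lebesgue–Stieltjes measure of the claim-size distribution `F`. -/
noncomputable def Lg (p β c r σ : ℝ) (F : StieltjesFunction ℝ)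
    (γ : ℝ) (u f : ℝ → ℝ) (x : ℝ) : ℝ :=
  σ ^ 2 * γ ^ 2 * x ^ 2 * deriv (deriv f) x / 2 + (p + r * γ * x) * deriv f x
    - (c + β) * u x + β * ∫ α in Icc (0 : ℝ) x, u (x - α) ∂F.measure

/-- `L*(u,f)(x) = sup_{γ ∈ [0,1]} L_γ(u,f)(x)`. -/
noncomputable def Lstar (p β c r σ : ℝ) (F : StieltjesFunction ℝ)
    (u f : ℝ → ℝ) (x : ℝ) : ℝ :=
  ⨆ γ : Icc (0 : ℝ) 1, Lg p β c r σ F (γ : ℝ) u f x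

/-- `u` is a viscosity supersolution of `L*(u) = 0` at `x ∈ (0,∞)`: every `C²` test
function `φ` such that `u - φ` attains its minimum over `(0,∞)` at `x` satisfies
`sup_γ L_γ(u,φ)(x) ≤ 0`. -/
def SupersolLAt (p β c r σ : ℝ) (F : StieltjesFunction ℝ) (u : ℝ → ℝ) (x : ℝ) : Prop :=
  ∀ φ : ℝ → ℝ, ContDiff ℝ 2 φ → (∀ y ∈ Ioi (0 : ℝ), u x - φ x ≤ u y - φ y) →
    Lstar p β c r σ F u φ x ≤ 0

/-! The test-function argument for the concavity of `u - K x²/2`: if, for some slope `m`,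
`y ↦ u y - K y²/2 - m y` had an interior minimum `x` on a subinterval of `[x₀,x₁]`, then
`u` would have the second-order subjet `(m + K x, K)` at `x`. Subtracting a large quartic
`C (y - x)⁴` turns the local jet into a global `C²` test function, and evaluating `L_1` on it
gives `σ² x² K/2 ≤ (c + β) u(x) + β |u(0)|`, because monotonicity makes the first-order term
nonnegative and bounds the integral term below. This fails as soon as `K` is large. -/

open Topology

lemma exists_quadratic_le_quartic (B₀ B₁ B₂ : ℝ) {d : ℝ} (hd : 0 < d) :
    ∃ C, 0 ≤ C ∧ ∀ z, d ≤ |z| → B₀ + B₁ * z + B₂ * z ^ 2 ≤ C * z ^ 4 := by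
  set A := |B₀| + |B₁| + |B₂|
  refine ⟨A * (1 / d ^ 4 + 1 / d ^ 2), by positivity, fun z hz => ?_⟩
  have hz2 : d ^ 2 ≤ z ^ 2 := by simpa only [sq_abs] using pow_le_pow_left₀ hd.le hz 2
  have h1 : 1 ≤ z ^ 4 / d ^ 4 := by
    rw [le_div_iff₀ (by positivity), one_mul]; nlinarith
  have h2 : z ^ 2 ≤ z ^ 4 / d ^ 2 := by
    rw [le_div_iff₀ (by positivity)]; nlinarith
  have habs : |z| ≤ 1 + z ^ 2 := by nlinarith [sq_abs z, sq_nonneg (|z| - 1)]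
  calc B₀ + B₁ * z + B₂ * z ^ 2 ≤ |B₀| + |B₁| * |z| + |B₂| * z ^ 2 := by
        have := (le_abs_self (B₁ * z)).trans (abs_mul B₁ z).le
        nlinarith [le_abs_self B₀, mul_le_mul_of_nonneg_right (le_abs_self B₂) (sq_nonneg z)]
    _ ≤ A * (z ^ 4 / d ^ 4 + z ^ 4 / d ^ 2) := by
        have := abs_nonneg B₀; have := abs_nonneg B₁; have := abs_nonneg B₂
        nlinarith [mul_le_mul_of_nonneg_left habs (abs_nonneg B₁)]
    _ = A * (1 / d ^ 4 + 1 / d ^ 2) * z ^ 4 := by ring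

lemma hasDerivAt_quartic (a b e C x y : ℝ) :
    HasDerivAt (fun y => a + b * (y - x) + e * (y - x) ^ 2 - C * (y - x) ^ 4)
      (b + 2 * e * (y - x) - 4 * C * (y - x) ^ 3) y := by
  have hz := (hasDerivAt_id' y).sub_const x
  refine ((((hasDerivAt_const y a).add (hz.const_mul b)).add ((hz.pow 2).const_mul e)).sub
    ((hz.pow 4).const_mul C)).congr_deriv ?_
  push_cast; ring

lemma hasDerivAt_cubic (b e C x y : ℝ) :
    HasDerivAt (fun y => b + 2 * e * (y - x) - 4 * C * (y - x) ^ 3)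
      (2 * e - 12 * C * (y - x) ^ 2) y := by
  have hz := (hasDerivAt_id' y).sub_const x
  refine (((hasDerivAt_const y b).add (hz.const_mul (2 * e))).sub
    ((hz.pow 3).const_mul (4 * C))).congr_deriv ?_
  push_cast; ring

lemma nonneg_of_subjet_of_eventually_le {u : ℝ → ℝ} {x b e : ℝ}
    (hle : ∀ᶠ y in 𝓝[<] x, u y ≤ u x)
    (hjet : ∀ᶠ y in 𝓝 x, u x + b * (y - x) + e * (y - x) ^ 2 ≤ u y) : 0 ≤ b := by
  have hbound : ∀ᶠ y in 𝓝[<] x, e * (x - y) ≤ b := by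
    filter_upwards [hle, nhdsWithin_le_nhds hjet, self_mem_nhdsWithin] with y hle hjet hy
    have hprod : (x - y) * (e * (x - y) - b) ≤ 0 := by linear_combination hjet + hle
    exact sub_nonpos.1 (nonpos_of_mul_nonpos_right hprod (sub_pos.2 hy))
  have hlim : Tendsto (fun y => e * (x - y)) (𝓝[<] x) (𝓝 0) := by
    have hcont : Continuous fun y => e * (x - y) := by fun_prop
    exact (hcont.tendsto' x 0 (by simp)).mono_left nhdsWithin_le_nhds
  exact le_of_tendsto hlim hbound

lemma StieltjesFunction.measureReal_Icc_le_one {F : StieltjesFunction ℝ}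
    (hF01 : ∀ x, F x ∈ Icc (0 : ℝ) 1) (a b : ℝ) : F.measure.real (Icc a b) ≤ 1 := by
  have hleft : 0 ≤ Function.leftLim F a :=
    (hF01 (a - 1)).1.trans (F.mono.le_leftLim (by linarith))
  rw [measureReal_def, F.measure_Icc, ENNReal.toReal_ofReal']
  exact max_le (by linarith [(hF01 b).2]) zero_le_one

lemma neg_abs_le_setIntegral_Icc_sub {μ : Measure ℝ} [IsFiniteMeasureOnCompacts μ]
    {u : ℝ → ℝ} {x : ℝ} (hμ : μ.real (Icc 0 x) ≤ 1) (hmono : MonotoneOn u (Ici 0)) :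
    -|u 0| ≤ ∫ α in Icc (0 : ℝ) x, u (x - α) ∂μ := by
  have hmem : ∀ α ∈ Icc (0 : ℝ) x, x - α ∈ Ici (0 : ℝ) := fun α hα => sub_nonneg.2 hα.2
  have hanti : AntitoneOn (fun α => u (x - α)) (Icc 0 x) := fun α hα α' hα' h =>
    hmono (hmem α' hα') (hmem α hα) (by linarith)
  have hconst : IntegrableOn (fun _ => u 0) (Icc 0 x) μ :=
    integrableOn_const isCompact_Icc.measure_lt_top.ne
  calc -|u 0| ≤ μ.real (Icc 0 x) * u 0 := by
        nlinarith [neg_abs_le (u 0), le_abs_self (u 0), measureReal_nonneg (μ := μ) (s := Icc 0 x)]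
    _ = ∫ _ in Icc (0 : ℝ) x, u 0 ∂μ := by rw [setIntegral_const, smul_eq_mul]
    _ ≤ ∫ α in Icc (0 : ℝ) x, u (x - α) ∂μ :=
        setIntegral_mono_on hconst (hanti.integrableOn_isCompact isCompact_Icc) measurableSet_Icc
          fun α hα => hmono self_mem_Ici (hmem α hα) (hmem α hα)

lemma concaveOn_Icc_of_not_isMinOn {f : ℝ → ℝ} {a b : ℝ} (hf : ContinuousOn f (Icc a b))
    (h : ∀ s t m x, a ≤ s → t ≤ b → x ∈ Ioo s t → ¬ IsMinOn (fun y => f y - m * y) (Icc s t) x) :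
    ConcaveOn ℝ (Icc a b) f := by
  refine concaveOn_of_slope_anti_adjacent (convex_Icc a b) fun {s z t} hs ht hsz hzt => ?_
  set m := (f t - f s) / (t - s)
  have hst : 0 < t - s := by linarith
  obtain ⟨x, hx, hxmin⟩ := isCompact_Icc.exists_isMinOn (nonempty_Icc.2 (hsz.trans hzt).le)
    ((hf.mono (Icc_subset_Icc hs.1 ht.2)).sub (continuousOn_const.mul continuousOn_id))
  have hends : f s - m * s = f t - m * t := by
    simp only [m]; field_simp; ring
  have hz : f s - m * s ≤ f z - m * z := by
    rcases hx.1.eq_or_lt with rfl | hsx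
    · exact hxmin ⟨hsz.le, hzt.le⟩
    rcases hx.2.eq_or_lt with rfl | hxt
    · rw [hends]; exact hxmin ⟨hsz.le, hzt.le⟩
    exact absurd hxmin (h s t m x hs.1 ht.2 ⟨hsx, hxt⟩)
  calc (f t - f z) / (t - z) ≤ m := by rw [div_le_iff₀ (by linarith)]; linarith
    _ ≤ (f z - f s) / (z - s) := by rw [le_div_iff₀ (by linarith)]; linarith

lemma continuousOn_Icc_of_eq_add_integral {u g : ℝ → ℝ} {a : ℝ}
    (hg : LocallyIntegrableOn g (Ici a)) (hu : ∀ x ∈ Ici a, u x = u a + ∫ t in a..x, g t)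
    (b : ℝ) : ContinuousOn u (Icc a b) := by
  have hint : IntegrableOn g (Icc a b) :=
    hg.integrableOn_compact_subset Icc_subset_Ici_self isCompact_Icc
  refine ContinuousOn.congr (f := fun x => u a + ∫ t in Ioc a x, g t)
    (continuousOn_const.add (intervalIntegral.continuousOn_primitive hint)) fun x hx => ?_
  rw [hu x hx.1, intervalIntegral.integral_of_le hx.1]

section Operator

variable {p β c r σ : ℝ} {F : StieltjesFunction ℝ} {u : ℝ → ℝ}

lemma Lg_le_Lstar {γ : ℝ} (hγ : γ ∈ Icc (0 : ℝ) 1) (f : ℝ → ℝ) (x : ℝ) :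
    Lg p β c r σ F γ u f x ≤ Lstar p β c r σ F u f x := by
  have hcont : ContinuousOn (fun γ => Lg p β c r σ F γ u f x) (Icc 0 1) := by
    unfold Lg; fun_prop
  refine le_ciSup (f := fun γ : Icc (0 : ℝ) 1 => Lg p β c r σ F γ u f x) ?_ ⟨γ, hγ⟩
  simpa only [image_eq_range] using isCompact_Icc.bddAbove_image hcont

lemma SupersolLAt.le_zero_of_subjet {x b e m : ℝ} (hsuper : SupersolLAt p β c r σ F u x)
    (hlow : ∀ y ∈ Ioi (0 : ℝ), m ≤ u y)
    (hjet : ∀ᶠ y in 𝓝 x, u x + b * (y - x) + e * (y - x) ^ 2 ≤ u y) :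
    σ ^ 2 * x ^ 2 * e + (p + r * x) * b - (c + β) * u x
      + β * ∫ α in Icc (0 : ℝ) x, u (x - α) ∂F.measure ≤ 0 := by
  obtain ⟨δ, hδ, hball⟩ := Metric.eventually_nhds_iff.1 hjet
  obtain ⟨C, hC0, hC⟩ := exists_quadratic_le_quartic (u x - m) b e hδ
  set φ : ℝ → ℝ := fun y => u x + b * (y - x) + e * (y - x) ^ 2 - C * (y - x) ^ 4
  have hmin : ∀ y ∈ Ioi (0 : ℝ), u x - φ x ≤ u y - φ y := by
    intro y hy
    have hquartic : 0 ≤ C * (y - x) ^ 4 := by positivity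
    rcases lt_or_ge (dist y x) δ with hnear | hfar
    · have := hball hnear
      simp only [φ]; linarith
    · have := hC (y - x) (by rwa [Real.dist_eq] at hfar)
      have := hlow y hy
      simp only [φ]; linarith
  have hφ : ContDiff ℝ 2 φ := by fun_prop
  have hderiv : deriv φ = fun y => b + 2 * e * (y - x) - 4 * C * (y - x) ^ 3 :=
    funext fun y => (hasDerivAt_quartic _ b e C x y).deriv
  have hderiv2 : deriv (deriv φ) x = 2 * e := by
    rw [hderiv, (hasDerivAt_cubic b e C x x).deriv]; ring
  have hL := (Lg_le_Lstar (by norm_num : (1 : ℝ) ∈ Icc (0 : ℝ) 1) φ x).trans (hsuper φ hφ hmin)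
  rw [Lg, hderiv2, hderiv] at hL
  linear_combination hL

lemma not_isMinOn_sub_quadratic (hp : 0 ≤ p) (hβ : 0 ≤ β) (hr : 0 ≤ r) (hcβ : 0 ≤ c + β)
    (hF01 : ∀ x, F x ∈ Icc (0 : ℝ) 1) (hmono : MonotoneOn u (Ici 0))
    {x₀ x₁ K m s t x : ℝ} (hsuper : SupersolLAt p β c r σ F u x) (hx₀ : 0 ≤ x₀) (hK : 0 ≤ K)
    (hbig : (c + β) * u x₁ + β * |u 0| < σ ^ 2 * x₀ ^ 2 * K / 2)
    (hs : x₀ ≤ s) (ht : t ≤ x₁) (hx : x ∈ Ioo s t) :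
    ¬ IsMinOn (fun y => u y - K * y ^ 2 / 2 - m * y) (Icc s t) x := by
  intro hmin
  have hxpos : 0 < x := hx₀.trans_lt (hs.trans_lt hx.1)
  have hjet : ∀ᶠ y in 𝓝 x, u x + (m + K * x) * (y - x) + K / 2 * (y - x) ^ 2 ≤ u y := by
    filter_upwards [hmin.isLocalMin (Icc_mem_nhds hx.1 hx.2)] with y hy
    linarith
  have hleft : ∀ᶠ y in 𝓝[<] x, u y ≤ u x := by
    filter_upwards [Ioo_mem_nhdsLT hxpos] with y hy
    exact hmono hy.1.le hxpos.le hy.2.le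
  have hslope : 0 ≤ (p + r * x) * (m + K * x) :=
    mul_nonneg (by positivity) (nonneg_of_subjet_of_eventually_le hleft hjet)
  have hxx₁ : x ≤ x₁ := (hx.2.trans_le ht).le
  have hux : u x ≤ u x₁ := hmono hxpos.le (hxpos.le.trans hxx₁) hxx₁
  have hint := neg_abs_le_setIntegral_Icc_sub (x := x) (F.measureReal_Icc_le_one hF01 0 x) hmono
  have hvisc :=
    hsuper.le_zero_of_subjet (fun y hy => hmono self_mem_Ici (mem_Ici.2 hy.le) hy.le) hjet
  have hx₀x : x₀ ^ 2 ≤ x ^ 2 := pow_le_pow_left₀ hx₀ (hs.trans hx.1.le) 2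
  nlinarith [mul_le_mul_of_nonneg_left hux hcβ, mul_le_mul_of_nonneg_left hint hβ,
    mul_le_mul_of_nonneg_left hx₀x (by positivity : 0 ≤ σ ^ 2 * K)]

end Operator

theorem supersolution_semiconcave_general
    (p β c r σ : ℝ) (hp : 0 < p) (hβ : 0 < β) (hr : 0 < r) (hrc : r < c) (hσ : 0 < σ)
    (F : StieltjesFunction ℝ)
    (hF01 : ∀ x : ℝ, F x ∈ Icc (0 : ℝ) 1)
    (u : ℝ → ℝ)
    (hAC : ∃ g : ℝ → ℝ, LocallyIntegrableOn g (Ici 0) volume ∧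
      ∀ x ∈ Ici (0 : ℝ), u x = u 0 + ∫ t in (0 : ℝ)..x, g t)
    (hmono : MonotoneOn u (Ici 0))
    (hsuper : ∀ x ∈ Ioi (0 : ℝ), SupersolLAt p β c r σ F u x) :
    ∀ x₀ x₁ : ℝ, 0 < x₀ → x₀ ≤ x₁ →
      ∃ K : ℝ, ConcaveOn ℝ (Icc x₀ x₁) (fun x => u x - K * x ^ 2 / 2) := by
  intro x₀ x₁ hx₀ _
  obtain ⟨g, hg, hu⟩ := hAC
  have hcβ : 0 ≤ c + β := by linarith
  set K := 2 * ((c + β) * |u x₁| + β * |u 0| + 1) / (σ ^ 2 * x₀ ^ 2)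
  have hK : σ ^ 2 * x₀ ^ 2 * K / 2 = (c + β) * |u x₁| + β * |u 0| + 1 := by
    simp only [K]; field_simp
  have hbig : (c + β) * u x₁ + β * |u 0| < σ ^ 2 * x₀ ^ 2 * K / 2 := by
    linarith [mul_le_mul_of_nonneg_left (le_abs_self (u x₁)) hcβ]
  refine ⟨K, concaveOn_Icc_of_not_isMinOn ?_ fun s t m x hs ht hx => ?_⟩
  · exact ((continuousOn_Icc_of_eq_add_integral hg hu x₁).mono
      (Icc_subset_Icc_left hx₀.le)).sub (by fun_prop)
  · exact not_isMinOn_sub_quadratic hp.le hβ.le hr.le hcβ hF01 hmono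
      (hsuper x (hx₀.trans_le (hs.trans hx.1.le))) hx₀.le (by positivity) hbig hs ht hx

/-- **Semiconcavity of supersolutions** (Proposition 3.1): any absolutely continuous and
nondecreasing viscosity supersolution of `L*(u) = 0` on `(0,∞)` is semiconcave on every
interval `[x₀,x₁] ⊂ (0,∞)`: there exists `K` such that `x ↦ u x - K x² / 2` is concave
on `[x₀,x₁]`. Absolute continuity is expressed by `u` being the indefinite integral of a
locally integrable function on `[0,∞)`. -/
theorem supersolution_semiconcave
    (p β c r σ : ℝ) (hp : 0 < p) (hβ : 0 < β) (hr : 0 < r) (hrc : r < c) (hσ : 0 < σ)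
    (F : StieltjesFunction ℝ)
    (hF01 : ∀ x : ℝ, F x ∈ Icc (0 : ℝ) 1)
    (hF0 : ∀ x : ℝ, x ≤ 0 → F x = 0)
    (hF1 : Tendsto (⇑F) atTop (nhds 1))
    (hFmean : IntegrableOn id (Ici (0 : ℝ)) F.measure)
    (u : ℝ → ℝ)
    (hAC : ∃ g : ℝ → ℝ, LocallyIntegrableOn g (Ici 0) volume ∧
      ∀ x ∈ Ici (0 : ℝ), u x = u 0 + ∫ t in (0 : ℝ)..x, g t)
    (hmono : MonotoneOn u (Ici 0))
    (hsuper : ∀ x ∈ Ioi (0 : ℝ), SupersolLAt p β c r σ F u x) :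
    ∀ x₀ x₁ : ℝ, 0 < x₀ → x₀ ≤ x₁ →
      ∃ K : ℝ, ConcaveOn ℝ (Icc x₀ x₁) (fun x => u x - K * x ^ 2 / 2) :=
  supersolution_semiconcave_general p β c r σ hp hβ hr hrc hσ F hF01 u hAC hmono hsuper
end

section
/- Assume F has a bounded density and let W be the unique increasing twice continuously differentiable solution of L*(W)=0 on (0,∞) with W(0)=1. Then for every x>0 the function γ̃(W), defined by γ̃(W)(x) = −rW'(x)/(σ²xW''(x)) if this quantity lies in (0,1] and γ̃(W)(x)=1 otherwise, satisfies γ̃(W)(x) = min{ 1, 2( M(W)(x) − pW'(x) ) / ( r x W'(x) ) }. -/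
open MeasureTheory Set Filter

/-- `W` is an increasing classical (twice continuously differentiable) solution of
`L*(W) = 0` on `(0,∞)` with boundary condition `W 0 = 1`. -/
def IsSolW (p β c r σ : ℝ) (F : StieltjesFunction ℝ) (W : ℝ → ℝ) : Prop :=
  StrictMonoOn W (Ici 0) ∧ ContinuousOn W (Ici 0) ∧ ContDiffOn ℝ 2 W (Ioi 0) ∧
    W 0 = 1 ∧ ∀ x ∈ Ioi (0 : ℝ), Lstar p β c r σ F W W x = 0

/-- The optimal investment fraction `γ̃(W)(x)`: the vertex `-rW'(x)/(σ²xW''(x))` of the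
quadratic `γ ↦ L_γ(W)(x)` if it lies in `(0,1]`, and `1` otherwise. -/
noncomputable def gammaTilde (r σ : ℝ) (W : ℝ → ℝ) (x : ℝ) : ℝ :=
  if -(r * deriv W x) / (σ ^ 2 * x * deriv (deriv W) x) ∈ Ioc (0 : ℝ) 1 then
    -(r * deriv W x) / (σ ^ 2 * x * deriv (deriv W) x)
  else 1

/-- `M(u)(x) = (c+β)u(x) - β ∫₀ˣ u(x-α) dF(α)`. -/
noncomputable def Mop (β c : ℝ) (F : StieltjesFunction ℝ) (u : ℝ → ℝ) (x : ℝ) : ℝ :=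
  (c + β) * u x - β * ∫ α in Icc (0 : ℝ) x, u (x - α) ∂F.measure

/-!
For fixed `x > 0`, `γ ↦ L_γ(W)(x)` is the quadratic `Aγ² + bγ + d` with
`A = σ²x²W''(x)/2`, `b = rxW'(x)` and `d = pW'(x) - M(W)(x)`, and `L*(W)(x) = 0` says that
its maximum over `[0,1]` is `0`. If the vertex `v = -b/(2A)` lies in `(0,1]`, the maximum is
attained there and its vanishing reads `d = -bv/2`; otherwise the quadratic increases on
`[0,1]`, so `A + b + d = 0` with `2A + b > 0`. In both cases `γ̃ = min 1 (-2d/b)`, provided `b > 0`.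

That `W'(x) > 0` is where `M(W)(x) > 0` enters: `W' ≥ 0` by monotonicity, so a zero of `W'`
is a local minimum of `W'` and hence also a zero of `W''`; the quadratic would then be the
negative constant `-M(W)(x)`, whose supremum is not `0`.
-/

open Topology

theorem MonotoneOn.deriv_nonneg_of_mem_nhds {g : ℝ → ℝ} {s : Set ℝ} {x : ℝ}
    (hg : MonotoneOn g s) (hs : s ∈ 𝓝 x) : 0 ≤ deriv g x := by
  rw [← derivWithin_of_mem_nhds hs]
  exact hg.derivWithin_nonneg

theorem MonotoneOn.deriv_deriv_eq_zero_of_deriv_eq_zero {g : ℝ → ℝ} {s : Set ℝ} {x : ℝ}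
    (hg : MonotoneOn g s) (hs : IsOpen s) (hx : x ∈ s) (h : deriv g x = 0) :
    deriv (deriv g) x = 0 := by
  have hmin : IsLocalMin (deriv g) x := by
    filter_upwards [hs.mem_nhds hx] with y hy
    rw [h]
    exact hg.deriv_nonneg_of_mem_nhds (hs.mem_nhds hy)
  exact hmin.deriv_eq_zero

theorem StieltjesFunction.measure_Icc_le_one {F : StieltjesFunction ℝ}
    (hF : ∀ x, F x ∈ Icc (0 : ℝ) 1) (a b : ℝ) : F.measure (Icc a b) ≤ 1 := by
  have hleft : 0 ≤ Function.leftLim F a :=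
    (hF (a - 1)).1.trans (F.mono.le_leftLim (sub_one_lt a))
  rw [F.measure_Icc, ENNReal.ofReal_le_one]
  linarith [(hF b).2]

theorem setIntegral_Icc_comp_sub_le {F : StieltjesFunction ℝ}
    (hF : ∀ x, F x ∈ Icc (0 : ℝ) 1) {u : ℝ → ℝ} (hu : MonotoneOn u (Ici 0))
    (hu0 : 0 ≤ u 0) {x : ℝ} (hx : 0 ≤ x) :
    ∫ α in Icc (0 : ℝ) x, u (x - α) ∂F.measure ≤ u x := by
  have hmeas : F.measure (Icc 0 x) ≤ 1 := F.measure_Icc_le_one hF 0 x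
  have hbound : ∀ α ∈ Icc (0 : ℝ) x, ‖u (x - α)‖ ≤ u x := by
    rintro α ⟨hα0, hαx⟩
    have hxα : x - α ∈ Ici (0 : ℝ) := sub_nonneg.2 hαx
    rw [Real.norm_of_nonneg (hu0.trans (hu self_mem_Ici hxα hxα))]
    exact hu hxα hx (by linarith)
  have hreal : F.measure.real (Icc 0 x) ≤ 1 :=
    ENNReal.toReal_le_of_le_ofReal zero_le_one (by rwa [ENNReal.ofReal_one])
  calc ∫ α in Icc (0 : ℝ) x, u (x - α) ∂F.measure
      ≤ ‖∫ α in Icc (0 : ℝ) x, u (x - α) ∂F.measure‖ := Real.le_norm_self _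
    _ ≤ u x * F.measure.real (Icc 0 x) :=
        norm_setIntegral_le_of_norm_le_const (hmeas.trans_lt ENNReal.one_lt_top) hbound
    _ ≤ u x := mul_le_of_le_one_right ((norm_nonneg _).trans (hbound 0 ⟨le_rfl, hx⟩)) hreal

theorem Mop_pos {β c : ℝ} (hβ : 0 ≤ β) (hc : 0 < c) {F : StieltjesFunction ℝ}
    (hF : ∀ x, F x ∈ Icc (0 : ℝ) 1) {u : ℝ → ℝ} (hu : MonotoneOn u (Ici 0))
    (hu0 : 0 ≤ u 0) {x : ℝ} (hx : 0 ≤ x) (hux : 0 < u x) : 0 < Mop β c F u x := by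
  have hint := mul_le_mul_of_nonneg_left (setIntegral_Icc_comp_sub_le hF hu hu0 hx) hβ
  rw [Mop]
  nlinarith

theorem Lg_eq_quadratic (p β c r σ : ℝ) (F : StieltjesFunction ℝ) (γ : ℝ) (u f : ℝ → ℝ)
    (x : ℝ) :
    Lg p β c r σ F γ u f x =
      σ ^ 2 * x ^ 2 * deriv (deriv f) x / 2 * γ ^ 2 + r * x * deriv f x * γ
        + (p * deriv f x - Mop β c F u x) := by
  rw [Lg, Mop]
  ring

theorem gammaTilde_eq_vertex (r σ : ℝ) (W : ℝ → ℝ) {x : ℝ} (hx : x ≠ 0) :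
    gammaTilde r σ W x =
      if -(r * x * deriv W x) / (2 * (σ ^ 2 * x ^ 2 * deriv (deriv W) x / 2)) ∈ Ioc (0 : ℝ) 1
      then -(r * x * deriv W x) / (2 * (σ ^ 2 * x ^ 2 * deriv (deriv W) x / 2)) else 1 := by
  have hvertex : -(r * x * deriv W x) / (2 * (σ ^ 2 * x ^ 2 * deriv (deriv W) x / 2)) =
      -(r * deriv W x) / (σ ^ 2 * x * deriv (deriv W) x) := by
    rw [← mul_div_mul_left (-(r * deriv W x)) _ hx]
    ring_nf
  rw [hvertex, gammaTilde]

theorem exists_eq_ciSup_Icc_of_continuousOn {g : ℝ → ℝ} {a b : ℝ} (hab : a ≤ b)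
    (hg : ContinuousOn g (Icc a b)) :
    ∃ γ₀ ∈ Icc a b, (⨆ γ : Icc a b, g γ) = g γ₀ ∧ ∀ γ ∈ Icc a b, g γ ≤ g γ₀ := by
  have hne : (Icc a b).Nonempty := nonempty_Icc.2 hab
  have : Nonempty (Icc a b) := hne.to_subtype
  obtain ⟨γ₀, hγ₀, hmax⟩ := isCompact_Icc.exists_isMaxOn hne hg
  refine ⟨γ₀, hγ₀, le_antisymm (ciSup_le fun γ ↦ hmax γ.2) ?_, fun γ hγ ↦ hmax hγ⟩
  exact le_ciSup (f := fun γ : Icc a b ↦ g γ) ⟨g γ₀, by rintro _ ⟨γ, rfl⟩; exact hmax γ.2⟩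
    ⟨γ₀, hγ₀⟩

theorem vertex_clip_eq_min_of_iSup_Icc_eq_zero {A b d : ℝ} (hb : 0 < b)
    (hsup : ⨆ γ : Icc (0 : ℝ) 1, A * (γ : ℝ) ^ 2 + b * γ + d = 0) :
    (if -b / (2 * A) ∈ Ioc (0 : ℝ) 1 then -b / (2 * A) else 1) = min 1 (-(2 * d) / b) := by
  obtain ⟨γ₀, hγ₀, hsup₀, hmax⟩ :=
    exists_eq_ciSup_Icc_of_continuousOn (g := fun γ ↦ A * γ ^ 2 + b * γ + d) zero_le_one
      (by fun_prop)
  have h0 : A * γ₀ ^ 2 + b * γ₀ + d = 0 := hsup₀.symm.trans hsup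
  have hle : ∀ γ ∈ Icc (0 : ℝ) 1, A * γ ^ 2 + b * γ + d ≤ 0 := fun γ hγ ↦ h0 ▸ hmax γ hγ
  rcases le_or_gt (2 * A + b) 0 with hAb | hAb
  · have hA : 2 * A < 0 := by linarith
    set v := -b / (2 * A) with hv
    have hAv : 2 * A * v = -b := mul_div_cancel₀ _ hA.ne
    have hv0 : 0 < v := div_pos_of_neg_of_neg (by linarith) hA
    have hv1 : v ≤ 1 := (div_le_one_of_neg hA).2 (by linarith)
    -- `q v - q γ₀ = -A (γ₀ - v)²` because `v` is the vertex
    have hqv : A * v ^ 2 + b * v + d = 0 :=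
      le_antisymm (hle v ⟨hv0.le, hv1⟩) (by nlinarith [sq_nonneg (γ₀ - v)])
    have hd : -(2 * d) / b = v := by
      rw [div_eq_iff hb.ne']
      linear_combination -2 * hqv + v * hAv
    rw [if_pos ⟨hv0, hv1⟩, hd, min_eq_right hv1]
  · have hnot : -b / (2 * A) ∉ Ioc (0 : ℝ) 1 := by
      rintro ⟨hv0, hv1⟩
      have hA : 2 * A < 0 := by
        by_contra! hA
        exact (div_nonpos_of_nonpos_of_nonneg (by linarith) hA).not_gt hv0
      linarith [(div_le_one_of_neg hA).1 hv1]
    -- on `[0,1]` the quadratic is increasing, so its maximum is at `1`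
    have hq1 : A + b + d = 0 := by
      have := hle 1 ⟨zero_le_one, le_rfl⟩
      nlinarith [mul_nonneg (mul_nonneg (sub_nonneg.2 hγ₀.2) hAb.le)
        (add_nonneg zero_le_one hγ₀.1), mul_nonneg hb.le (sq_nonneg (1 - γ₀)), hγ₀.1]
    rw [if_neg hnot, min_eq_left ((le_div_iff₀ hb).2 (by linarith))]

theorem gammaTilde_formula_general
    (p β c r σ : ℝ) (hβ : 0 < β) (hr : 0 < r) (hrc : r < c)
    (F : StieltjesFunction ℝ)
    (hF01 : ∀ x : ℝ, F x ∈ Icc (0 : ℝ) 1)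
    (W : ℝ → ℝ) (hW : IsSolW p β c r σ F W) :
    ∀ x ∈ Ioi (0 : ℝ),
      gammaTilde r σ W x =
        min 1 (2 * (Mop β c F W x - p * deriv W x) / (r * x * deriv W x)) := by
  intro x hx
  obtain ⟨hmono, -, -, hW0, hL⟩ := hW
  have hsup := hL x hx
  simp only [Lstar, Lg_eq_quadratic] at hsup
  have hWx : 1 < W x := hW0 ▸ hmono self_mem_Ici (Ioi_subset_Ici_self hx) hx
  have hM : 0 < Mop β c F W x :=
    Mop_pos hβ.le (hr.trans hrc) hF01 hmono.monotoneOn (hW0 ▸ zero_le_one) (le_of_lt hx)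
      (by linarith)
  have hmono' : MonotoneOn W (Ioi 0) := hmono.monotoneOn.mono Ioi_subset_Ici_self
  have hW' : 0 < deriv W x := by
    refine (hmono'.deriv_nonneg_of_mem_nhds (Ioi_mem_nhds hx)).lt_of_ne fun h ↦ ?_
    have hW'' := hmono'.deriv_deriv_eq_zero_of_deriv_eq_zero isOpen_Ioi hx h.symm
    simp only [← h, hW'', mul_zero, zero_div, zero_mul, zero_add, zero_sub, ciSup_const] at hsup
    linarith
  rw [gammaTilde_eq_vertex r σ W hx.ne', vertex_clip_eq_min_of_iSup_Icc_eq_zero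
    (mul_pos (mul_pos hr hx) hW') hsup]
  congr 1
  ring

/-- (Proposition 6.2(a)): for the scale function `W` (the unique increasing `C²` solution
of `L*(W)=0` on `(0,∞)` with `W 0 = 1`), the optimal investment fraction satisfies
`γ̃(W)(x) = min {1, 2(M(W)(x) - pW'(x)) / (rxW'(x))}` for every `x > 0`. -/
theorem gammaTilde_formula
    (p β c r σ : ℝ) (hp : 0 < p) (hβ : 0 < β) (hr : 0 < r) (hrc : r < c) (hσ : 0 < σ)
    (F : StieltjesFunction ℝ)
    (hF01 : ∀ x : ℝ, F x ∈ Icc (0 : ℝ) 1)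
    (hF0 : ∀ x : ℝ, x ≤ 0 → F x = 0)
    (hF1 : Tendsto (⇑F) atTop (nhds 1))
    (hFmean : IntegrableOn id (Ici (0 : ℝ)) F.measure)
    (hFd : ∃ f : ℝ → ℝ, Measurable f ∧ (∃ C : ℝ, ∀ t, |f t| ≤ C) ∧ (∀ t, 0 ≤ f t) ∧
      (∀ t : ℝ, t ≤ 0 → f t = 0) ∧ ∀ x : ℝ, F x = ∫ t in (0 : ℝ)..x, f t)
    (W : ℝ → ℝ) (hW : IsSolW p β c r σ F W) :
    ∀ x ∈ Ioi (0 : ℝ),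
      gammaTilde r σ W x =
        min 1 (2 * (Mop β c F W x - p * deriv W x) / (r * x * deriv W x)) :=
  gammaTilde_formula_general p β c r σ hβ hr hrc F hF01 W hW
end

section
/- Assume F has a bounded density and let W be the unique increasing twice continuously differentiable solution of L*(W)=0 on (0,∞) with W(0)=1. Then the infimum of W' over [0,∞) is attained and positive: there exists x ≥ 0 with W'(x) = inf_{y≥0} W'(y) > 0 (here W'(0) means the right derivative at 0). -/
/-!
Write `R(x) = (c + β) W(x) - β ∫_{[0,x]} W(x - α) dF(α)` (`zerothOrderPart`), so that
`L_γ(W)(x)` is the quadratic `(σ² x² W''/2) γ² + (r x W') γ + (p W' - R)` in `γ`. Since `W` is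
increasing with `W ≥ 1`, we have `c W ≤ R`, and `R → c + β` at `0⁺` because `F` is right-continuous with `F(0) = 0`.

At a point `x > 0` where `W'` has a minimum from the left, `W''(x) ≤ 0`, so the maximum over
`γ ∈ [0,1]` being `0` gives `c W(x) ≤ R(x) ≤ (p + r x) W'(x)`. Together with `W(x) ≥ 1 + x W'(x)`
(mean value theorem) this rules out such minima of `W'` over `[0, x]` for `x ≥ p / (c - r)`,
so the infimum of `W'` over `[0, ∞)` is a minimum over the compact interval `[0, p / (c - r)]`;
it is positive by the same inequality. This needs `W'` continuous up to `0`: the choice `γ = 0`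
gives `p W' ≤ R`, and if `W' < θ < (c + β) / p` near `0` the balance forces `W'' ≥ κ / t²`,
which is incompatible with `W' ≥ 0`; hence `W'(0⁺) = (c + β) / p`.
-/

open MeasureTheory Set Filter

open Topology

lemma zero_le_max_add_of_quadratic_eq_zero {a b k γ : ℝ} (hb : 0 ≤ b) (hγ : γ ∈ Icc (0 : ℝ) 1)
    (h : a * γ ^ 2 + b * γ + k = 0) : 0 ≤ max a 0 + b + k := by
  have hγ2 : γ ^ 2 ≤ 1 := pow_le_one₀ hγ.1 hγ.2
  have ha : a * γ ^ 2 ≤ max a 0 := by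
    calc a * γ ^ 2 ≤ max a 0 * γ ^ 2 := by gcongr; exact le_max_left a 0
      _ ≤ max a 0 := mul_le_of_le_one_right (le_max_right a 0) hγ2
  nlinarith [mul_le_of_le_one_right hb hγ.2]

lemma exists_mem_Icc_eq_iSup {f : ℝ → ℝ} (hf : Continuous f) {a b : ℝ} (hab : a ≤ b) :
    ∃ γ ∈ Icc a b, f γ = ⨆ γ : Icc a b, f γ := by
  obtain ⟨γ, hγ, h⟩ := isCompact_Icc.exists_sSup_image_eq (nonempty_Icc.2 hab) hf.continuousOn
  exact ⟨γ, hγ, by rw [← h, sSup_image']⟩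

lemma le_iSup_Icc {f : ℝ → ℝ} (hf : Continuous f) {a b γ : ℝ} (hγ : γ ∈ Icc a b) :
    f γ ≤ ⨆ γ : Icc a b, f γ := by
  have hbdd := (isCompact_Icc (a := a) (b := b)).bddAbove_image hf.continuousOn
  rw [image_eq_range] at hbdd
  exact le_ciSup hbdd ⟨γ, hγ⟩

lemma HasDerivAt.nonpos_of_eventually_nhdsLT_le {g : ℝ → ℝ} {d x : ℝ} (hd : HasDerivAt g d x)
    (hmin : ∀ᶠ t in 𝓝[<] x, g x ≤ g t) : d ≤ 0 := by
  have hslope : Tendsto (slope g x) (𝓝[<] x) (𝓝 d) :=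
    (hasDerivAt_iff_tendsto_slope.1 hd).mono_left (nhdsWithin_mono _ fun t ht => ne_of_lt ht)
  refine le_of_tendsto hslope ?_
  filter_upwards [hmin, self_mem_nhdsWithin] with t hgt ht
  rw [slope_def_field]
  exact div_nonpos_of_nonneg_of_nonpos (sub_nonneg.2 hgt) (sub_nonpos.2 (le_of_lt ht))

lemma exists_isMinOn_Ici_of_not_isMinOn {g : ℝ → ℝ} {a b : ℝ} (hg : ContinuousOn g (Ici a))
    (hab : a ≤ b) (h : ∀ x, b ≤ x → ¬IsMinOn g (Icc a x) x) :
    ∃ x ∈ Ici a, IsMinOn g (Ici a) x := by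
  obtain ⟨x, hx, hxmin⟩ :=
    isCompact_Icc.exists_isMinOn (nonempty_Icc.2 hab) (hg.mono Icc_subset_Ici_self)
  refine ⟨x, hx.1, fun y (hy : a ≤ y) => ?_⟩
  by_cases hyb : y ≤ b
  · exact hxmin ⟨hy, hyb⟩
  obtain ⟨z, hz, hzmin⟩ :=
    isCompact_Icc.exists_isMinOn (nonempty_Icc.2 hy) (hg.mono Icc_subset_Ici_self)
  have hzb : z < b := not_le.1 fun hbz => h z hbz (hzmin.on_subset (Icc_subset_Icc_right hz.2))
  calc g x ≤ g z := hxmin ⟨hz.1, hzb.le⟩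
    _ ≤ g y := hzmin ⟨hy, le_rfl⟩

lemma le_of_forall_lt_imp_div_sq_le_deriv {g g' : ℝ → ℝ} {κ θ x : ℝ} (hκ : 0 < κ) (hx : 0 < x)
    (hg : ∀ t ∈ Ioc 0 x, HasDerivAt g (g' t) t) (hg0 : ∀ t ∈ Ioc 0 x, 0 ≤ g t)
    (hg' : ∀ t ∈ Ioc 0 x, g t < θ → κ / t ^ 2 ≤ g' t) : θ ≤ g x := by
  by_contra! hgx
  -- Where `g < θ` we have `h' > 0`, so `h` is minimal over `[s, x]` at `s`; but `h → ∞` at `0⁺`.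
  set h : ℝ → ℝ := fun t => g t + κ / 2 * t⁻¹ with h_def
  have hh : ∀ t ∈ Ioc 0 x, HasDerivAt h (g' t - κ / 2 * (t ^ 2)⁻¹) t := fun t ht =>
    ((hg t ht).add ((hasDerivAt_inv ht.1.ne').const_mul (κ / 2))).congr_deriv (by ring)
  have hle : ∀ s ∈ Ioo 0 x, h s ≤ h x := by
    intro s hs
    obtain ⟨z, hz, hzmin⟩ := isCompact_Icc.exists_isMinOn (nonempty_Icc.2 hs.2.le)
      fun t ht => (hh t ⟨hs.1.trans_le ht.1, ht.2⟩).continuousAt.continuousWithinAt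
    have hz0 : 0 < z := hs.1.trans_le hz.1
    rcases hz.1.eq_or_lt with rfl | hsz
    · exact hzmin (right_mem_Icc.2 hs.2.le)
    have hd := (hh z ⟨hz0, hz.2⟩).nonpos_of_eventually_nhdsLT_le <|
      mem_of_superset (Ioo_mem_nhdsLT hsz) fun t ht => hzmin ⟨ht.1.le, ht.2.le.trans hz.2⟩
    have hgz : g z < θ := calc
      g z = h z - κ / 2 * z⁻¹ := by simp [h_def]
      _ ≤ h x - κ / 2 * x⁻¹ := by
        gcongr
        · exact hzmin (right_mem_Icc.2 hs.2.le)
        · exact hz.2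
      _ = g x := by simp [h_def]
      _ < θ := hgx
    have hκz : 0 < κ / z ^ 2 := by positivity
    have := hg' z ⟨hz0, hz.2⟩ hgz
    rw [div_eq_mul_inv] at this hκz
    linarith
  obtain ⟨s, hs, hsx⟩ := (((tendsto_inv_nhdsGT_zero.const_mul_atTop (by positivity :
    0 < κ / 2)).eventually_gt_atTop (h x)).and (Ioo_mem_nhdsGT hx)).exists
  have := hle s hsx
  have := hg0 s ⟨hsx.1, hsx.2.le⟩
  simp only [h_def] at *
  linarith

lemma StieltjesFunction.measureReal_Icc_zero {F : StieltjesFunction ℝ}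
    (hF0 : ∀ x : ℝ, x ≤ 0 → F x = 0) {x : ℝ} (hx : 0 ≤ x) : F.measure.real (Icc 0 x) = F x := by
  have hleft : Function.leftLim F 0 = 0 := le_antisymm
    ((F.mono.leftLim_le le_rfl).trans_eq (hF0 0 le_rfl))
    ((hF0 (-1) (by norm_num)).symm.trans_le (F.mono.le_leftLim (by norm_num)))
  have hFx : 0 ≤ F x := (hF0 0 le_rfl).symm.trans_le (F.mono hx)
  rw [measureReal_def, F.measure_Icc, hleft, sub_zero, ENNReal.toReal_ofReal hFx]

noncomputable def zerothOrderPart (β c : ℝ) (F : StieltjesFunction ℝ) (u : ℝ → ℝ) (x : ℝ) : ℝ :=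
  (c + β) * u x - β * ∫ α in Icc (0 : ℝ) x, u (x - α) ∂F.measure

section Operator

variable {p β c r σ : ℝ} {F : StieltjesFunction ℝ} {u f : ℝ → ℝ} {x : ℝ}

lemma Lg_eq (γ : ℝ) : Lg p β c r σ F γ u f x = σ ^ 2 * x ^ 2 * deriv (deriv f) x / 2 * γ ^ 2 +
    r * x * deriv f x * γ + (p * deriv f x - zerothOrderPart β c F u x) := by
  simp only [Lg, zerothOrderPart]
  ring

lemma continuous_Lg : Continuous fun γ => Lg p β c r σ F γ u f x := by
  simp only [Lg_eq]
  fun_prop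

end Operator

lemma deriv_le_of_isMinOn_derivWithin_Ici {f : ℝ → ℝ} {s : Set ℝ} {x t : ℝ} (hx : 0 < x)
    (ht : 0 < t) (hts : t ∈ s) (h : IsMinOn (derivWithin f (Ici 0)) s x) :
    deriv f x ≤ deriv f t := by
  have : derivWithin f (Ici 0) x ≤ derivWithin f (Ici 0) t := h hts
  rwa [derivWithin_of_mem_nhds (Ici_mem_nhds hx), derivWithin_of_mem_nhds (Ici_mem_nhds ht)]
    at this

namespace IsSolW

variable {p β c r σ : ℝ} {F : StieltjesFunction ℝ} {W : ℝ → ℝ} {x : ℝ}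

lemma one_le (hW : IsSolW p β c r σ F W) (hx : 0 ≤ x) : 1 ≤ W x :=
  calc 1 = W 0 := hW.2.2.2.1.symm
    _ ≤ W x := hW.1.monotoneOn self_mem_Ici hx hx

lemma hasDerivAt (hW : IsSolW p β c r σ F W) (hx : 0 < x) : HasDerivAt W (deriv W x) x :=
  ((hW.2.2.1.differentiableOn (by norm_num) x hx).differentiableAt (Ioi_mem_nhds hx)).hasDerivAt

lemma hasDerivAt_deriv (hW : IsSolW p β c r σ F W) (hx : 0 < x) :
    HasDerivAt (deriv W) (deriv (deriv W) x) x :=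
  (((hW.2.2.1.deriv_of_isOpen isOpen_Ioi (m := 1) (by norm_num)).differentiableOn one_ne_zero x
    hx).differentiableAt (Ioi_mem_nhds hx)).hasDerivAt

lemma derivWithin_nonneg (hW : IsSolW p β c r σ F W) : 0 ≤ derivWithin W (Ici 0) x :=
  hW.1.monotoneOn.derivWithin_nonneg

lemma deriv_nonneg (hW : IsSolW p β c r σ F W) (hx : 0 < x) : 0 ≤ deriv W x := by
  rw [← derivWithin_of_mem_nhds (Ici_mem_nhds hx)]
  exact hW.derivWithin_nonneg

lemma deriv_mul_le_zerothOrderPart (hW : IsSolW p β c r σ F W) (hx : 0 < x) :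
    p * deriv W x ≤ zerothOrderPart β c F W x := by
  have h : Lg p β c r σ F 0 W W x ≤ Lstar p β c r σ F W W x :=
    le_iSup_Icc continuous_Lg (left_mem_Icc.2 zero_le_one)
  rw [hW.2.2.2.2 x hx, Lg_eq] at h
  simpa using h

lemma zero_le_max_add (hW : IsSolW p β c r σ F W) (hr : 0 ≤ r) (hx : 0 < x) :
    0 ≤ max (σ ^ 2 * x ^ 2 * deriv (deriv W) x / 2) 0 + (p + r * x) * deriv W x -
      zerothOrderPart β c F W x := by
  obtain ⟨γ, hγ, hγmax⟩ : ∃ γ ∈ Icc (0 : ℝ) 1, Lg p β c r σ F γ W W x = Lstar p β c r σ F W W x :=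
    exists_mem_Icc_eq_iSup continuous_Lg zero_le_one
  rw [hW.2.2.2.2 x hx, Lg_eq] at hγmax
  have := zero_le_max_add_of_quadratic_eq_zero
    (mul_nonneg (mul_nonneg hr hx.le) (hW.deriv_nonneg hx)) hγ hγmax
  linarith [show (p + r * x) * deriv W x = r * x * deriv W x + p * deriv W x by ring]

lemma integral_nonneg (hW : IsSolW p β c r σ F W) :
    0 ≤ ∫ α in Icc (0 : ℝ) x, W (x - α) ∂F.measure :=
  setIntegral_nonneg measurableSet_Icc fun _ hα =>
    zero_le_one.trans (hW.one_le (sub_nonneg.2 hα.2))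

lemma integral_le_mul (hW : IsSolW p β c r σ F W) (hF0 : ∀ x : ℝ, x ≤ 0 → F x = 0)
    (hx : 0 ≤ x) : ∫ α in Icc (0 : ℝ) x, W (x - α) ∂F.measure ≤ W x * F x := by
  rw [← F.measureReal_Icc_zero hF0 hx]
  refine (le_abs_self _).trans (Real.norm_eq_abs _ ▸
    norm_setIntegral_le_of_norm_le_const measure_Icc_lt_top fun α hα => ?_)
  have hxα : 0 ≤ x - α := sub_nonneg.2 hα.2
  rw [Real.norm_eq_abs, abs_of_nonneg (zero_le_one.trans (hW.one_le hxα))]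
  exact hW.1.monotoneOn hxα hx (by linarith [hα.1])

lemma mul_le_zerothOrderPart (hW : IsSolW p β c r σ F W) (hβ : 0 ≤ β)
    (hF0 : ∀ x : ℝ, x ≤ 0 → F x = 0) (hF1 : ∀ x : ℝ, F x ≤ 1) (hx : 0 ≤ x) :
    c * W x ≤ zerothOrderPart β c F W x := by
  have hWF : W x * F x ≤ W x := mul_le_of_le_one_right (zero_le_one.trans (hW.one_le hx)) (hF1 x)
  have := mul_le_mul_of_nonneg_left ((hW.integral_le_mul hF0 hx).trans hWF) hβ
  simp only [zerothOrderPart]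
  linarith

lemma tendsto_zerothOrderPart (hW : IsSolW p β c r σ F W) (hF0 : ∀ x : ℝ, x ≤ 0 → F x = 0) :
    Tendsto (zerothOrderPart β c F W) (𝓝[>] 0) (𝓝 (c + β)) := by
  have hWlim : Tendsto W (𝓝[>] 0) (𝓝 1) := by
    simpa [hW.2.2.2.1] using ((hW.2.1 0 self_mem_Ici).mono Ioi_subset_Ici_self).tendsto
  have hFlim : Tendsto F (𝓝[>] 0) (𝓝 0) := by
    simpa [hF0 0 le_rfl] using ((F.right_continuous 0).mono Ioi_subset_Ici_self).tendsto
  have hint : Tendsto (fun x => ∫ α in Icc (0 : ℝ) x, W (x - α) ∂F.measure) (𝓝[>] 0) (𝓝 0) := by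
    refine tendsto_of_tendsto_of_tendsto_of_le_of_le' tendsto_const_nhds
      (by simpa using hWlim.mul hFlim) (Eventually.of_forall fun y => hW.integral_nonneg (x := y))
      (eventually_nhdsWithin_of_forall fun y hy => hW.integral_le_mul hF0 (le_of_lt hy))
  have h := ((tendsto_const_nhds (x := c + β)).mul hWlim).sub
    ((tendsto_const_nhds (x := β)).mul hint)
  rw [mul_one, mul_zero, sub_zero] at h
  exact h

lemma mul_le_of_eventually_deriv_le (hW : IsSolW p β c r σ F W) (hβ : 0 ≤ β) (hr : 0 ≤ r)
    (hF0 : ∀ x : ℝ, x ≤ 0 → F x = 0) (hF1 : ∀ x : ℝ, F x ≤ 1) (hx : 0 < x)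
    (hmin : ∀ᶠ t in 𝓝[<] x, deriv W x ≤ deriv W t) :
    c * W x ≤ (p + r * x) * deriv W x := by
  have hW'' : deriv (deriv W) x ≤ 0 := (hW.hasDerivAt_deriv hx).nonpos_of_eventually_nhdsLT_le hmin
  have hdiff : σ ^ 2 * x ^ 2 * deriv (deriv W) x / 2 ≤ 0 :=
    div_nonpos_of_nonpos_of_nonneg (mul_nonpos_of_nonneg_of_nonpos (by positivity) hW'') two_pos.le
  have := hW.zero_le_max_add hr hx
  rw [max_eq_right hdiff] at this
  linarith [hW.mul_le_zerothOrderPart hβ hF0 hF1 hx.le]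

lemma eventually_le_deriv (hW : IsSolW p β c r σ F W) (hp : 0 < p) (hr : 0 ≤ r) (hσ : 0 < σ)
    (hF0 : ∀ x : ℝ, x ≤ 0 → F x = 0) {θ : ℝ} (hθ : θ < (c + β) / p) :
    ∀ᶠ x in 𝓝[>] 0, θ ≤ deriv W x := by
  set K := (c + β - p * θ) / 2 with hK
  have hKpos : 0 < K := by have := (lt_div_iff₀' hp).1 hθ; linarith
  have hlim : Tendsto (fun t => zerothOrderPart β c F W t - (p + r * t) * θ) (𝓝[>] 0)
      (𝓝 (c + β - (p + r * 0) * θ)) :=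
    (hW.tendsto_zerothOrderPart hF0).sub ((tendsto_nhdsWithin_of_tendsto_nhds
      (continuous_const.add (continuous_const.mul continuous_id)).continuousAt.tendsto).mul_const θ)
  obtain ⟨ε, hε, hεK⟩ := mem_nhdsGT_iff_exists_Ioc_subset.1 (hlim.eventually (eventually_ge_nhds
    (show K < c + β - (p + r * 0) * θ by linarith)))
  -- Where `W' < θ` near `0`, only the `γ²` term can bring `L*(W)` up to `0`.
  have hconvex : ∀ t ∈ Ioc 0 ε, deriv W t < θ → 2 * K / σ ^ 2 / t ^ 2 ≤ deriv (deriv W) t := by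
    intro t ht hθt
    have hKt : K ≤ zerothOrderPart β c F W t - (p + r * t) * θ := hεK ht
    have hdrift : (p + r * t) * deriv W t ≤ (p + r * t) * θ :=
      mul_le_mul_of_nonneg_left hθt.le (by nlinarith [ht.1])
    have hmax : K ≤ max (σ ^ 2 * t ^ 2 * deriv (deriv W) t / 2) 0 := by
      linarith [hW.zero_le_max_add hr ht.1]
    have ha : K ≤ σ ^ 2 * t ^ 2 * deriv (deriv W) t / 2 :=
      (le_max_iff.1 hmax).resolve_right hKpos.not_ge
    rw [div_div, div_le_iff₀ (by have := ht.1; positivity)]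
    linarith
  filter_upwards [Ioc_mem_nhdsGT hε] with x hx
  exact le_of_forall_lt_imp_div_sq_le_deriv (by positivity) hx.1
    (fun t ht => hW.hasDerivAt_deriv ht.1) (fun t ht => hW.deriv_nonneg ht.1)
    fun t ht => hconvex t ⟨ht.1, ht.2.trans hx.2⟩

lemma tendsto_deriv_nhdsGT (hW : IsSolW p β c r σ F W) (hp : 0 < p) (hr : 0 ≤ r) (hσ : 0 < σ)
    (hF0 : ∀ x : ℝ, x ≤ 0 → F x = 0) :
    Tendsto (deriv W) (𝓝[>] 0) (𝓝 ((c + β) / p)) := by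
  refine tendsto_order.2 ⟨fun a ha => ?_, fun a ha => ?_⟩
  · obtain ⟨θ, haθ, hθ⟩ := exists_between ha
    filter_upwards [hW.eventually_le_deriv hp hr hσ hF0 hθ] with x hx
    exact haθ.trans_le hx
  · filter_upwards [(hW.tendsto_zerothOrderPart hF0).eventually
      (eventually_lt_nhds ((div_lt_iff₀' hp).1 ha)), self_mem_nhdsWithin] with x hx hx0
    exact lt_of_mul_lt_mul_left ((hW.deriv_mul_le_zerothOrderPart hx0).trans_lt hx) hp.le

lemma hasDerivWithinAt_Ici_zero (hW : IsSolW p β c r σ F W) (hp : 0 < p) (hr : 0 ≤ r)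
    (hσ : 0 < σ) (hF0 : ∀ x : ℝ, x ≤ 0 → F x = 0) :
    HasDerivWithinAt W ((c + β) / p) (Ici 0) 0 :=
  hasDerivWithinAt_Ici_of_tendsto_deriv (hW.2.2.1.differentiableOn (by norm_num))
    ((hW.2.1 0 self_mem_Ici).mono Ioi_subset_Ici_self) self_mem_nhdsWithin
    (hW.tendsto_deriv_nhdsGT hp hr hσ hF0)

lemma continuousOn_derivWithin (hW : IsSolW p β c r σ F W) (hp : 0 < p) (hr : 0 ≤ r)
    (hσ : 0 < σ) (hF0 : ∀ x : ℝ, x ≤ 0 → F x = 0) :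
    ContinuousOn (derivWithin W (Ici 0)) (Ici 0) := by
  have heq : ∀ t ∈ Ioi (0 : ℝ), deriv W t = derivWithin W (Ici 0) t := fun t ht =>
    (derivWithin_of_mem_nhds (Ici_mem_nhds ht)).symm
  intro x (hx : 0 ≤ x)
  rcases hx.eq_or_lt with rfl | hx
  · refine continuousWithinAt_Ioi_iff_Ici.1 ?_
    rw [ContinuousWithinAt, ((hW.hasDerivWithinAt_Ici_zero hp hr hσ hF0).derivWithin
      (uniqueDiffWithinAt_Ici 0))]
    exact (hW.tendsto_deriv_nhdsGT hp hr hσ hF0).congr' (eventually_nhdsWithin_of_forall heq)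
  · exact ((hW.hasDerivAt_deriv hx).continuousAt.congr
      (eventually_of_mem (Ioi_mem_nhds hx) heq)).continuousWithinAt

lemma not_isMinOn_derivWithin (hW : IsSolW p β c r σ F W) (hp : 0 < p) (hβ : 0 ≤ β)
    (hr : 0 ≤ r) (hrc : r < c) (hF0 : ∀ x : ℝ, x ≤ 0 → F x = 0) (hF1 : ∀ x : ℝ, F x ≤ 1)
    (hx : p / (c - r) ≤ x) : ¬IsMinOn (derivWithin W (Ici 0)) (Icc 0 x) x := by
  intro hmin
  have hcr : 0 < c - r := sub_pos.2 hrc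
  have hx0 : 0 < x := (div_pos hp hcr).trans_le hx
  have hpx : p ≤ (c - r) * x := (div_le_iff₀' hcr).1 hx
  have hbalance := hW.mul_le_of_eventually_deriv_le hβ hr hF0 hF1 hx0
    (eventually_of_mem (Ioo_mem_nhdsLT hx0) fun t ht =>
      deriv_le_of_isMinOn_derivWithin_Ici hx0 ht.1 (Ioo_subset_Icc_self ht) hmin)
  obtain ⟨ξ, hξ, hslope⟩ := exists_hasDerivAt_eq_slope W (deriv W) hx0
    (hW.2.1.mono Icc_subset_Ici_self) fun t ht => hW.hasDerivAt ht.1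
  have hμξ : deriv W x ≤ deriv W ξ :=
    deriv_le_of_isMinOn_derivWithin_Ici hx0 hξ.1 (Ioo_subset_Icc_self hξ) hmin
  rw [hW.2.2.2.1, sub_zero, eq_div_iff hx0.ne'] at hslope
  have hWx : 1 + deriv W x * x ≤ W x := by nlinarith
  nlinarith [mul_nonneg (hW.deriv_nonneg hx0) (sub_nonneg.2 hpx),
    mul_le_mul_of_nonneg_left hWx (hr.trans_lt hrc).le]

lemma derivWithin_pos_of_isMinOn (hW : IsSolW p β c r σ F W) (hp : 0 < p) (hβ : 0 ≤ β)
    (hr : 0 ≤ r) (hc : 0 < c) (hσ : 0 < σ) (hF0 : ∀ x : ℝ, x ≤ 0 → F x = 0)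
    (hF1 : ∀ x : ℝ, F x ≤ 1) (hx : 0 ≤ x) (hmin : IsMinOn (derivWithin W (Ici 0)) (Ici 0) x) :
    0 < derivWithin W (Ici 0) x := by
  rcases hx.eq_or_lt with rfl | hx
  · rw [(hW.hasDerivWithinAt_Ici_zero hp hr hσ hF0).derivWithin (uniqueDiffWithinAt_Ici 0)]
    positivity
  rw [derivWithin_of_mem_nhds (Ici_mem_nhds hx)]
  have hbalance := hW.mul_le_of_eventually_deriv_le hβ hr hF0 hF1 hx
    (eventually_of_mem (Ioo_mem_nhdsLT hx) fun t ht =>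
      deriv_le_of_isMinOn_derivWithin_Ici hx ht.1 (mem_Ici.2 ht.1.le) hmin)
  have hWx := hW.one_le hx.le
  refine (hW.deriv_nonneg hx).lt_of_ne fun h0 => ?_
  rw [← h0, mul_zero] at hbalance
  nlinarith

end IsSolW

theorem deriv_scale_function_attains_min_general
    (p β c r σ : ℝ) (hp : 0 < p) (hβ : 0 < β) (hr : 0 < r) (hrc : r < c) (hσ : 0 < σ)
    (F : StieltjesFunction ℝ)
    (hF01 : ∀ x : ℝ, F x ∈ Icc (0 : ℝ) 1)
    (hF0 : ∀ x : ℝ, x ≤ 0 → F x = 0)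
    (W : ℝ → ℝ) (hW : IsSolW p β c r σ F W) :
    ∃ x ∈ Ici (0 : ℝ),
      (∀ y ∈ Ici (0 : ℝ), derivWithin W (Ici 0) x ≤ derivWithin W (Ici 0) y) ∧
      0 < derivWithin W (Ici 0) x := by
  have hF1 : ∀ x, F x ≤ 1 := fun x => (hF01 x).2
  obtain ⟨x, hx, hmin⟩ := exists_isMinOn_Ici_of_not_isMinOn
    (hW.continuousOn_derivWithin hp hr.le hσ hF0) (div_nonneg hp.le (sub_pos.2 hrc).le)
    fun x hx => hW.not_isMinOn_derivWithin hp hβ.le hr.le hrc hF0 hF1 hx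
  exact ⟨x, hx, fun y hy => hmin hy,
    hW.derivWithin_pos_of_isMinOn hp hβ.le hr.le (hr.trans hrc) hσ hF0 hF1 hx hmin⟩

/-- **The infimum of `W'` is attained and positive** (Proposition 7.1): assume `F` has a
bounded density and let `W` be the unique increasing `C²` solution of `L*(W)=0` on
`(0,∞)` with `W 0 = 1` (differentiable from the right at `0`). Then there exists
`x ≥ 0` at which `W'` (the derivative within `[0,∞)`, i.e. the right derivative at `0`)
attains its infimum over `[0,∞)`, and this infimum is positive. -/
theorem deriv_scale_function_attains_min
    (p β c r σ : ℝ) (hp : 0 < p) (hβ : 0 < β) (hr : 0 < r) (hrc : r < c) (hσ : 0 < σ)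
    (F : StieltjesFunction ℝ)
    (hF01 : ∀ x : ℝ, F x ∈ Icc (0 : ℝ) 1)
    (hF0 : ∀ x : ℝ, x ≤ 0 → F x = 0)
    (hF1 : Tendsto (⇑F) atTop (nhds 1))
    (hFmean : IntegrableOn id (Ici (0 : ℝ)) F.measure)
    (hFd : ∃ f : ℝ → ℝ, Measurable f ∧ (∃ C : ℝ, ∀ t, |f t| ≤ C) ∧ (∀ t, 0 ≤ f t) ∧
      (∀ t : ℝ, t ≤ 0 → f t = 0) ∧ ∀ x : ℝ, F x = ∫ t in (0 : ℝ)..x, f t)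
    (W : ℝ → ℝ) (hW : IsSolW p β c r σ F W)
    (hW0 : DifferentiableWithinAt ℝ W (Ici 0) 0) :
    ∃ x ∈ Ici (0 : ℝ),
      (∀ y ∈ Ici (0 : ℝ), derivWithin W (Ici 0) x ≤ derivWithin W (Ici 0) y) ∧
      0 < derivWithin W (Ici 0) x :=
  deriv_scale_function_attains_min_general p β c r σ hp hβ hr hrc hσ F hF01 hF0 W hW
end

section
/- Slope-one points force a sign condition: assume F has a bounded density. Let v be a locally Lipschitz viscosity supersolution of the HJB equation max{1−u'(x), L*(u)(x)}=0 on (0,∞) satisfying v(y)−v(x) ≥ y−x for 0≤x<y. If at some x>0 the right derivative v'(x⁺) exists and equals 1, then Λ(x) := (p+rx) − (c+β)v(x) + β∫₀ˣ v(x−α)dF(α) ≤ 0. -/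
open MeasureTheory Set Filter

/-- `u` is a viscosity supersolution of `max {1 - u'(x), L*(u)(x)} = 0` at `x ∈ (0,∞)`:
every `C²` test function `φ` such that `u - φ` attains its minimum over `(0,∞)` at `x`
satisfies `max {1 - φ'(x), sup_γ L_γ(u,φ)(x)} ≤ 0`. -/
def SupersolHJBAt (p β c r σ : ℝ) (F : StieltjesFunction ℝ) (u : ℝ → ℝ) (x : ℝ) : Prop :=
  ∀ φ : ℝ → ℝ, ContDiff ℝ 2 φ → (∀ y ∈ Ioi (0 : ℝ), u x - φ x ≤ u y - φ y) →
    max (1 - deriv φ x) (Lstar p β c r σ F u φ x) ≤ 0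

/-- `u` is a viscosity subsolution of `max {1 - u'(x), L*(u)(x)} = 0` at `x ∈ (0,∞)`:
every `C²` test function `ψ` such that `u - ψ` attains its maximum over `(0,∞)` at `x`
satisfies `max {1 - ψ'(x), sup_γ L_γ(u,ψ)(x)} ≥ 0`. -/
def SubsolHJBAt (p β c r σ : ℝ) (F : StieltjesFunction ℝ) (u : ℝ → ℝ) (x : ℝ) : Prop :=
  ∀ ψ : ℝ → ℝ, ContDiff ℝ 2 ψ → (∀ y ∈ Ioi (0 : ℝ), u y - ψ y ≤ u x - ψ x) →
    0 ≤ max (1 - deriv ψ x) (Lstar p β c r σ F u ψ x)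

open Topology

/-!
For `δ > 0` compare `v` with the cubic `ψ y = v x + (1 + δ²/6) (y - x) - (y - x)³/6`. Since the
right derivative of `v` at `x` is `1`, `v < ψ` somewhere in `(x, x + δ)`, while the growth bound
`v y - v x ≥ y - x` gives `v ≥ ψ` beyond `x + δ`; so `v - ψ` has a negative minimum over `[x, ∞)`
at some `y ∈ (x, x + δ]`. Subtracting from `ψ` a smooth penalty that vanishes on `[x, ∞)` makes
this a minimum over `(0, ∞)`, and the supersolution inequality with `γ = 1` at `y` reads
`-σ²y²(y - x)/2 + (p + r y) ψ'(y) - (c + β) v y + β ∫ v (y - α) dF ≤ 0`. As `v` is nondecreasing,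
the integral is at least `∫₀ˣ v (x - α) dF + v 0 (F y - F x)`, and letting `δ → 0` (so that
`y → x⁺`, `ψ'(y) → 1`, and `v`, `F` are right-continuous at `x`) yields `Λ(x) ≤ 0`.
-/

lemma continuousOn_Ici_of_lipschitzOnWith_Icc {f : ℝ → ℝ} {a : ℝ}
    (hf : ∀ b, a < b → ∃ K, LipschitzOnWith K f (Icc a b)) : ContinuousOn f (Ici a) := by
  intro y hy
  obtain ⟨K, hK⟩ := hf (y + 1) (by linarith [mem_Ici.mp hy])
  refine (hK.continuousOn y ⟨hy, by linarith⟩).mono_of_mem_nhdsWithin ?_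
  rw [← Ici_inter_Iic]
  exact inter_mem_nhdsWithin _ (Iic_mem_nhds (by linarith))

lemma exists_contDiff_penalty {g : ℝ → ℝ} {a x m : ℝ} (hgx : ContinuousWithinAt g (Ioo a x) x)
    (hm : m < g x) (hbdd : BddBelow (g '' Ioo a x)) :
    ∃ P : ℝ → ℝ, ContDiff ℝ 2 P ∧ (∀ y, x ≤ y → P y = 0) ∧ ∀ y ∈ Ioo a x, m ≤ g y + P y := by
  obtain ⟨δ, hδ, hnear⟩ : ∃ δ > 0, ∀ y ∈ Ioo a x, x - δ < y → m < g y := by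
    obtain ⟨δ, hδ, h⟩ := Metric.eventually_nhds_iff.mp
      (eventually_nhdsWithin_iff.mp (hgx.eventually_const_lt hm))
    refine ⟨δ, hδ, fun y hy hyδ => h ?_ hy⟩
    rw [Real.dist_eq, abs_sub_lt_iff]
    constructor <;> linarith [hy.2]
  obtain ⟨L, hL⟩ := hbdd
  set B := max 0 (m - L)
  refine ⟨fun y => B * Real.smoothTransition ((x - y) / δ), by fun_prop, fun y hy => ?_,
    fun y hy => ?_⟩
  · dsimp only
    rw [Real.smoothTransition.zero_of_nonpos (div_nonpos_of_nonpos_of_nonneg (by linarith) hδ.le),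
      mul_zero]
  · dsimp only
    rcases lt_or_ge (x - δ) y with hyδ | hyδ
    · nlinarith [hnear y hy hyδ, Real.smoothTransition.nonneg ((x - y) / δ), le_max_left 0 (m - L)]
    · rw [Real.smoothTransition.one_of_one_le ((one_le_div hδ).mpr (by linarith)), mul_one]
      linarith [hL (mem_image_of_mem g hy), le_max_right 0 (m - L)]

lemma exists_isMinOn_Ici_of_nonneg_of_neg {g : ℝ → ℝ} {a b c : ℝ}
    (hg : ContinuousOn g (Icc a b)) (hb : ∀ y, b < y → 0 ≤ g y) (hc : c ∈ Icc a b)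
    (hgc : g c < 0) : ∃ y₀ ∈ Icc a b, g y₀ < 0 ∧ IsMinOn g (Ici a) y₀ := by
  obtain ⟨y₀, hy₀, hmin⟩ := isCompact_Icc.exists_isMinOn ⟨c, hc⟩ hg
  have hneg : g y₀ < 0 := (hmin hc).trans_lt hgc
  refine ⟨y₀, hy₀, hneg, fun y (hy : a ≤ y) => ?_⟩
  rcases le_or_gt y b with hyb | hyb
  · exact hmin ⟨hy, hyb⟩
  · exact hneg.le.trans (hb y hyb)

noncomputable def cubicProfile (x₀ a b : ℝ) (y : ℝ) : ℝ := a + b * (y - x₀) - (y - x₀) ^ 3 / 6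

lemma contDiff_cubicProfile (x₀ a b : ℝ) : ContDiff ℝ 2 (cubicProfile x₀ a b) := by
  unfold cubicProfile; fun_prop

lemma deriv_cubicProfile (x₀ a b : ℝ) :
    deriv (cubicProfile x₀ a b) = fun y => b - (y - x₀) ^ 2 / 2 := by
  ext y
  have h₁ : HasDerivAt (fun y : ℝ => y - x₀) 1 y := (hasDerivAt_id y).sub_const x₀
  have h := ((h₁.const_mul b).const_add a).sub ((h₁.pow 3).div_const 6)
  exact h.deriv.trans (by ring)

lemma deriv_deriv_cubicProfile (x₀ a b y : ℝ) :
    deriv (deriv (cubicProfile x₀ a b)) y = -(y - x₀) := by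
  have h₁ : HasDerivAt (fun y : ℝ => y - x₀) 1 y := (hasDerivAt_id y).sub_const x₀
  rw [deriv_cubicProfile]
  exact (((h₁.pow 2).div_const 2).const_sub b).deriv.trans (by ring)

lemma exists_lt_cubicProfile {v : ℝ → ℝ} {x δ : ℝ} (hd : HasDerivWithinAt v 1 (Ici x) x)
    (hδ : 0 < δ) : ∃ z ∈ Ioo x (x + δ / 2), v z < cubicProfile x (v x) (1 + δ ^ 2 / 6) z := by
  obtain ⟨z, hslope, hz⟩ := ((hd.Ioi_of_Ici.limsup_slope_le' (lt_irrefl x)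
    (show (1 : ℝ) < 1 + δ ^ 2 / 12 by have := pow_pos hδ 2; linarith)).and
    (Ioo_mem_nhdsGT (show x < x + δ / 2 by linarith))).exists
  have hzx : 0 < z - x := sub_pos.mpr hz.1
  rw [slope_def_field, div_lt_iff₀ hzx] at hslope
  refine ⟨z, hz, ?_⟩
  unfold cubicProfile
  nlinarith [mul_lt_mul_of_pos_left (show z - x < δ / 2 by linarith [hz.2]) hzx]

lemma cubicProfile_le_of_add_le {v : ℝ → ℝ} {x δ y : ℝ} (hδ : 0 < δ)
    (hgrow : ∀ y, x < y → y - x ≤ v y - v x) (hy : x + δ ≤ y) :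
    cubicProfile x (v x) (1 + δ ^ 2 / 6) y ≤ v y := by
  have hyx : 0 < y - x := by linarith
  have hsq : δ ^ 2 ≤ (y - x) ^ 2 := pow_le_pow_left₀ hδ.le (by linarith) 2
  unfold cubicProfile
  nlinarith [hgrow y (by linarith), mul_le_mul_of_nonneg_left hsq hyx.le]

lemma exists_touching_cubicProfile {v : ℝ → ℝ} {x δ : ℝ} (hv : ContinuousOn v (Ici 0))
    (hx : 0 ≤ x) (hδ : 0 < δ) (hgrow : ∀ y, x < y → y - x ≤ v y - v x)
    (hd : HasDerivWithinAt v 1 (Ici x) x) :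
    ∃ y₀ ∈ Ioc x (x + δ), ∃ φ : ℝ → ℝ, ContDiff ℝ 2 φ ∧
      (∀ y ∈ Ioi 0, v y₀ - φ y₀ ≤ v y - φ y) ∧
      φ =ᶠ[𝓝 y₀] cubicProfile x (v x) (1 + δ ^ 2 / 6) := by
  set ψ := cubicProfile x (v x) (1 + δ ^ 2 / 6)
  set g := fun y => v y - ψ y
  have hgx : g x = 0 := by simp [g, ψ, cubicProfile]
  have hg : ContinuousOn g (Ici 0) :=
    hv.sub (contDiff_cubicProfile _ _ _).continuous.continuousOn
  obtain ⟨z, hz, hgz⟩ := exists_lt_cubicProfile hd hδ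
  obtain ⟨y₀, hy₀, hneg, hmin⟩ := exists_isMinOn_Ici_of_nonneg_of_neg
    (hg.mono fun y hy => hx.trans hy.1)
    (fun y hy => sub_nonneg.mpr (cubicProfile_le_of_add_le hδ hgrow hy.le))
    ⟨hz.1.le, by linarith [hz.2]⟩ (sub_neg.mpr hgz)
  have hxy₀ : x < y₀ := hy₀.1.lt_of_ne (by rintro rfl; exact hneg.ne hgx)
  obtain ⟨P, hP, hP0, hPm⟩ := exists_contDiff_penalty
    ((hg x hx).mono fun y hy => hy.1.le) (hneg.trans_eq hgx.symm)
    ((isCompact_Icc.bddBelow_image (hg.mono Icc_subset_Ici_self)).mono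
      (image_mono Ioo_subset_Icc_self))
  refine ⟨y₀, ⟨hxy₀, hy₀.2⟩, ψ - P, (contDiff_cubicProfile _ _ _).sub hP, fun y hy => ?_, ?_⟩
  · have hsplit : ∀ y, v y - (ψ - P) y = g y + P y := fun y => by simp only [g, Pi.sub_apply]; ring
    rw [hsplit, hsplit, hP0 y₀ hxy₀.le, add_zero]
    rcases lt_or_ge y x with hyx | hyx
    · exact hPm y ⟨hy, hyx⟩
    · rw [hP0 y hyx, add_zero]
      exact hmin hyx
  · filter_upwards [Ioi_mem_nhds hxy₀] with y hy
    simp [hP0 y (le_of_lt hy)]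

lemma SupersolHJBAt.lg_le_zero {p β c r σ : ℝ} {F : StieltjesFunction ℝ} {u φ : ℝ → ℝ}
    {x γ : ℝ} (h : SupersolHJBAt p β c r σ F u x) (hφ : ContDiff ℝ 2 φ)
    (hmin : ∀ y ∈ Ioi 0, u x - φ x ≤ u y - φ y) (hγ : γ ∈ Icc 0 1) :
    Lg p β c r σ F γ u φ x ≤ 0 := by
  have hbdd : BddAbove (range fun γ : Icc (0 : ℝ) 1 => Lg p β c r σ F γ u φ x) := by
    rw [← image_eq_range (fun γ => Lg p β c r σ F γ u φ x)]
    exact (isCompact_Icc.image (by unfold Lg; fun_prop)).bddAbove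
  exact (le_ciSup hbdd ⟨γ, hγ⟩).trans ((le_max_right _ _).trans (h φ hφ hmin))

lemma setIntegral_Icc_comp_sub_add_le {μ : Measure ℝ} [IsFiniteMeasureOnCompacts μ]
    {u : ℝ → ℝ} {x y : ℝ} (hu : ContinuousOn u (Ici 0)) (hmono : MonotoneOn u (Ici 0))
    (hx : 0 ≤ x) (hxy : x ≤ y) :
    ∫ α in Icc 0 x, u (x - α) ∂μ + u 0 * μ.real (Ioc x y) ≤ ∫ α in Icc 0 y, u (y - α) ∂μ := by
  have hint : ∀ z, IntegrableOn (fun α => u (z - α)) (Icc 0 z) μ := fun z =>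
    (hu.comp (by fun_prop) fun α hα => sub_nonneg.mpr hα.2).integrableOn_compact isCompact_Icc
  have hintIoc : IntegrableOn (fun α => u (y - α)) (Ioc x y) μ :=
    (hint y).mono_set fun α hα => ⟨hx.trans hα.1.le, hα.2⟩
  rw [← Icc_union_Ioc_eq_Icc hx hxy, setIntegral_union
    (disjoint_left.mpr fun α hα hα' => hα'.1.not_ge hα.2) measurableSet_Ioc
    ((hint y).mono_set (Icc_subset_Icc_right hxy)) hintIoc]
  refine add_le_add ?_ ?_
  · exact setIntegral_mono_on (hint x) ((hint y).mono_set (Icc_subset_Icc_right hxy))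
      measurableSet_Icc fun α hα => hmono (sub_nonneg.mpr hα.2)
        (sub_nonneg.mpr (hα.2.trans hxy)) (by linarith)
  · rw [mul_comm, ← smul_eq_mul, ← setIntegral_const]
    exact setIntegral_mono_on (integrableOn_const (measure_Ioc_lt_top.ne)) hintIoc
      measurableSet_Ioc fun α hα => hmono self_mem_Ici (sub_nonneg.mpr hα.2) (sub_nonneg.mpr hα.2)

lemma StieltjesFunction.measureReal_Ioc (F : StieltjesFunction ℝ) {a b : ℝ} (hab : a ≤ b) :
    F.measure.real (Ioc a b) = F b - F a := by
  rw [measureReal_def, F.measure_Ioc, ENNReal.toReal_ofReal (sub_nonneg.mpr (F.mono hab))]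

lemma le_zero_of_tendsto_of_forall_exists_Ioc {G : ℝ → ℝ → ℝ} {x L : ℝ}
    (hG : Tendsto (fun q : ℝ × ℝ => G q.1 q.2) (𝓝[>] 0 ×ˢ 𝓝[≥] x) (𝓝 L))
    (h : ∀ δ > 0, ∃ y ∈ Ioc x (x + δ), G δ y ≤ 0) : L ≤ 0 := by
  by_contra! hL
  obtain ⟨pa, hpa, pb, hpb, hpos⟩ := eventually_prod_iff.mp (hG.eventually (lt_mem_nhds hL))
  obtain ⟨b, hb, hIco⟩ := mem_nhdsGE_iff_exists_Ico_subset.mp hpb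
  obtain ⟨δ, hδpa, hδ, hδb⟩ := (hpa.and
    (Ioo_mem_nhdsGT (sub_pos.mpr (show x < b from hb)))).exists
  obtain ⟨y, hy, hGy⟩ := h δ hδ
  exact (hpos hδpa (hIco ⟨hy.1.le, by linarith [hy.2]⟩)).not_ge hGy

theorem slope_one_sign_condition_general
    (p β c r σ : ℝ) (hβ : 0 < β)
    (F : StieltjesFunction ℝ)
    (v : ℝ → ℝ)
    (hA1 : ∀ a b : ℝ, 0 ≤ a → a < b → ∃ K : NNReal, LipschitzOnWith K v (Icc a b))
    (hsuper : ∀ x ∈ Ioi (0 : ℝ), SupersolHJBAt p β c r σ F v x)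
    (hA2 : ∀ x y : ℝ, 0 ≤ x → x < y → y - x ≤ v y - v x)
    (x : ℝ) (hx : 0 < x)
    (hd : HasDerivWithinAt v 1 (Ici x) x) :
    (p + r * x) - (c + β) * v x
      + β * ∫ α in Icc (0 : ℝ) x, v (x - α) ∂F.measure ≤ 0 := by
  have hv : ContinuousOn v (Ici 0) :=
    continuousOn_Ici_of_lipschitzOnWith_Icc fun b hb => hA1 0 b le_rfl hb
  have hmono : MonotoneOn v (Ici 0) := fun a ha b _ hab =>
    hab.eq_or_lt.elim (fun h => h ▸ le_rfl) fun h => by linarith [hA2 a b ha h]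
  set I := ∫ α in Icc (0 : ℝ) x, v (x - α) ∂F.measure
  set H : ℝ × ℝ × ℝ × ℝ → ℝ := fun q => σ ^ 2 * q.2.1 ^ 2 * -(q.2.1 - x) / 2
    + (p + r * q.2.1) * (1 + q.1 ^ 2 / 6 - (q.2.1 - x) ^ 2 / 2) - (c + β) * q.2.2.1
    + β * (I + v 0 * (q.2.2.2 - F x))
  refine le_zero_of_tendsto_of_forall_exists_Ioc (x := x) (G := fun δ y => H (δ, y, v y, F y))
    ?_ fun δ hδ => ?_
  · have hsnd := tendsto_snd (f := 𝓝[>] (0 : ℝ)) (g := 𝓝[≥] x)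
    have hH := ((show Continuous H by fun_prop).tendsto (0, x, v x, F x)).comp
      ((tendsto_fst.mono_right nhdsWithin_le_nhds).prodMk_nhds
        ((hsnd.mono_right nhdsWithin_le_nhds).prodMk_nhds
          ((hd.continuousWithinAt.tendsto.comp hsnd).prodMk_nhds
            ((F.right_continuous x).tendsto.comp hsnd))))
    have hlim : H (0, x, v x, F x) = (p + r * x) - (c + β) * v x + β * I := by
      simp only [H]; ring
    rwa [hlim] at hH
  · obtain ⟨y, hy, φ, hφ, hmin, hφψ⟩ :=
      exists_touching_cubicProfile hv hx.le hδ (fun y hy => hA2 x y hx.le hy) hd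
    have hL := (hsuper y (hx.trans hy.1)).lg_le_zero hφ hmin ⟨zero_le_one, le_rfl⟩
    rw [Lg, hφψ.deriv_eq, hφψ.deriv.deriv_eq, deriv_deriv_cubicProfile, deriv_cubicProfile] at hL
    have hI := setIntegral_Icc_comp_sub_add_le (μ := F.measure) hv hmono hx.le hy.1.le
    rw [F.measureReal_Ioc hy.1.le] at hI
    refine ⟨y, hy, ?_⟩
    simp only [H]
    nlinarith [mul_le_mul_of_nonneg_left hI hβ.le]

/-- **Slope-one points force a sign condition** (from Lemma 8.1): assume `F` has a
bounded density. If `v` is a locally Lipschitz viscosity supersolution of the HJB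
equation on `(0,∞)` with `v(y) - v(x) ≥ y - x` for `0 ≤ x < y`, and at some `x > 0` the
right derivative of `v` exists and equals `1`, then
`Λ(x) = (p + rx) - (c+β)v(x) + β∫₀ˣ v(x-α)dF(α) ≤ 0`. -/
theorem slope_one_sign_condition
    (p β c r σ : ℝ) (hp : 0 < p) (hβ : 0 < β) (hr : 0 < r) (hrc : r < c) (hσ : 0 < σ)
    (F : StieltjesFunction ℝ)
    (hF01 : ∀ x : ℝ, F x ∈ Icc (0 : ℝ) 1)
    (hF0 : ∀ x : ℝ, x ≤ 0 → F x = 0)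
    (hF1 : Tendsto (⇑F) atTop (nhds 1))
    (hFmean : IntegrableOn id (Ici (0 : ℝ)) F.measure)
    (hFd : ∃ f : ℝ → ℝ, Measurable f ∧ (∃ C : ℝ, ∀ t, |f t| ≤ C) ∧ (∀ t, 0 ≤ f t) ∧
      (∀ t : ℝ, t ≤ 0 → f t = 0) ∧ ∀ x : ℝ, F x = ∫ t in (0 : ℝ)..x, f t)
    (v : ℝ → ℝ)
    (hA1 : ∀ a b : ℝ, 0 ≤ a → a < b → ∃ K : NNReal, LipschitzOnWith K v (Icc a b))
    (hsuper : ∀ x ∈ Ioi (0 : ℝ), SupersolHJBAt p β c r σ F v x)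
    (hA2 : ∀ x y : ℝ, 0 ≤ x → x < y → y - x ≤ v y - v x)
    (x : ℝ) (hx : 0 < x)
    (hd : HasDerivWithinAt v 1 (Ici x) x) :
    (p + r * x) - (c + β) * v x
      + β * ∫ α in Icc (0 : ℝ) x, v (x - α) ∂F.measure ≤ 0 :=
  slope_one_sign_condition_general p β c r σ hβ F v hA1 hsuper hA2 x hx hd
end
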